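/- (Provable guarantee for approximating the maximum safe radius by finite optimisation over the τ-grid.) Let α ∈ E be strictly classified as c₀ (g(α,c₀) > 0), let c ≠ c₀ be a target class, d > 0, τ > 0, and δ = (n·τ^p)^{1/p}. Call x an adversarial example if ‖x − α‖_p ≤ d and g(x,c) > 0. Assume (i) the set of adversarial examples is nonempty, and (ii) for every τ-grid point x' with respect to α there is a class c_{x'} top at x' with δ ≤ 2·g(x', c_{x'}) / M(c_{x'}). Let m = sInf { ‖x − α‖_p : x adversarial } and m_G = sInf { ‖x − α‖_p : x is a τ-grid point with respect to α and g(x,c) > 0 }. Then m_G − δ/2 ≤ m ≤ m_G. -/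

import Mathlib

/-- `x` is a τ-grid point with respect to `α`: every coordinate of `x` differs
from the corresponding coordinate of `α` by a natural multiple of `τ`. -/
def IsGridPoint {n : ℕ} {q : ENNReal} (τ : ℝ)
    (α x : PiLp q (fun _ : Fin n => ℝ)) : Prop :=
  ∀ i, ∃ m : ℕ, |x i - α i| = m * τ

/-- The minimum confidence margin of class `c` at `x`:
`g(x,c) = min_{c' ≠ c} (f c x − f c' x)`. -/
noncomputable def margin {E : Type*} {C : Type*} [Fintype C] [DecidableEq C] [Nontrivial C]
    (f : C → E → ℝ) (c : C) (x : E) : ℝ :=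
  (Finset.univ.erase c).inf'
    (by obtain ⟨b, hb⟩ := exists_ne c
        exact ⟨b, Finset.mem_erase.2 ⟨hb, Finset.mem_univ b⟩⟩)
    (fun c' => f c x - f c' x)

/-- `M(c) = max_{c' ≠ c} (K c + K c')`. -/
noncomputable def Mconst {C : Type*} [Fintype C] [DecidableEq C] [Nontrivial C]
    (K : C → ℝ) (c : C) : ℝ :=
  (Finset.univ.erase c).sup'
    (by obtain ⟨b, hb⟩ := exists_ne c
        exact ⟨b, Finset.mem_erase.2 ⟨hb, Finset.mem_univ b⟩⟩)
    (fun c' => K c + K c')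

/-!
Round an adversarial example `x` coordinatewise to the nearest τ-grid point `y`; then
`‖y - x‖ ≤ δ / 2`. The class `c'` granted at `y` by the hypothesis on the grid keeps a
nonnegative margin on the ball of radius `δ / 2` around `y`, because margins are
`M(c')`-Lipschitz; since `x` is strictly classified as `c`, this forces `c' = c`, so `y` is
itself adversarial and `m_G ≤ m + δ / 2`. Conversely every adversarial grid point lies within
distance `d` of `α` or farther from it than some adversarial example, whence `m ≤ m_G`.
-/

open Finset

section Margin

variable {E C : Type*} [Fintype C] [DecidableEq C] [Nontrivial C]

lemma margin_le_sub (f : C → E → ℝ) {c c' : C} (h : c' ≠ c) (x : E) :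
    margin f c x ≤ f c x - f c' x :=
  inf'_le _ (mem_erase.2 ⟨h, mem_univ _⟩)

lemma add_le_Mconst (K : C → ℝ) {c c' : C} (h : c' ≠ c) : K c + K c' ≤ Mconst K c :=
  le_sup' (fun c'' => K c + K c'') (mem_erase.2 ⟨h, mem_univ _⟩)

lemma Mconst_pos {K : C → ℝ} (hK : ∀ c, 0 < K c) (c : C) : 0 < Mconst K c := by
  obtain ⟨b, hb⟩ := exists_ne c
  linarith [add_le_Mconst K hb, hK c, hK b]

lemma margin_le_margin_add_Mconst_mul_dist [PseudoMetricSpace E] {f : C → E → ℝ} {K : C → ℝ}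
    (hf : ∀ c x y, |f c x - f c y| ≤ K c * dist x y) (c : C) (x y : E) :
    margin f c y ≤ margin f c x + Mconst K c * dist x y := by
  refine sub_le_iff_le_add.1 (le_inf' _ _ fun c' hc' => ?_)
  have hne : c' ≠ c := (mem_erase.1 hc').1
  have hfc : f c y - f c x ≤ K c * dist x y := dist_comm x y ▸ (abs_le.1 (hf c y x)).2
  have hfc' : f c' x - f c' y ≤ K c' * dist x y := (abs_le.1 (hf c' x y)).2
  have hK : (K c + K c') * dist x y ≤ Mconst K c * dist x y :=
    mul_le_mul_of_nonneg_right (add_le_Mconst K hne) dist_nonneg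
  linarith [margin_le_sub f hne y]

lemma eq_of_margin_pos_of_margin_nonneg {f : C → E → ℝ} {c c' : C} {x : E}
    (hc : 0 < margin f c x) (hc' : 0 ≤ margin f c' x) : c' = c := by
  by_contra hne
  linarith [margin_le_sub f hne x, margin_le_sub f (Ne.symm hne) x]

lemma eq_and_margin_pos_of_Mconst_mul_dist_le [PseudoMetricSpace E] {f : C → E → ℝ}
    {K : C → ℝ} (hf : ∀ c x y, |f c x - f c y| ≤ K c * dist x y) {c c' : C} {x y : E}
    (hx : 0 < margin f c x) (hy : Mconst K c' * dist x y ≤ margin f c' y) :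
    c' = c ∧ 0 < margin f c y := by
  have hx' : 0 ≤ margin f c' x := by
    linarith [margin_le_margin_add_Mconst_mul_dist hf c' x y]
  obtain rfl := eq_of_margin_pos_of_margin_nonneg hx hx'
  have hlip := margin_le_margin_add_Mconst_mul_dist hf c' y x
  rw [dist_comm] at hlip
  exact ⟨rfl, by linarith⟩

end Margin

lemma PiLp.norm_le_of_forall_norm_le {ι : Type*} [Fintype ι] {β : ι → Type*}
    [∀ i, SeminormedAddCommGroup (β i)] {p : ℝ} (hp : 0 < p)
    {x : PiLp (ENNReal.ofReal p) β} {r : ℝ} (hx : ∀ i, ‖x i‖ ≤ r) :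
    ‖x‖ ≤ (Fintype.card ι * r ^ p) ^ (1 / p) := by
  have hq : (ENNReal.ofReal p).toReal = p := ENNReal.toReal_ofReal hp.le
  rw [PiLp.norm_eq_sum (by rwa [hq]), hq]
  have hsum : ∑ i, ‖x i‖ ^ p ≤ Fintype.card ι * r ^ p := by
    simpa [nsmul_eq_mul] using Finset.sum_le_card_nsmul univ (fun i => ‖x i‖ ^ p) (r ^ p)
      fun i _ => Real.rpow_le_rpow (norm_nonneg _) (hx i) hp.le
  exact Real.rpow_le_rpow (sum_nonneg fun i _ => by positivity) hsum (by positivity)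

section Grid

variable {q : ENNReal} {ι : Type*}

noncomputable def gridRound (τ : ℝ) (α x : PiLp q (fun _ : ι => ℝ)) : PiLp q (fun _ : ι => ℝ) :=
  WithLp.toLp q fun i => α i + τ * round ((x i - α i) / τ)

lemma isGridPoint_gridRound {n : ℕ} {τ : ℝ} (hτ : 0 < τ) (α x : PiLp q (fun _ : Fin n => ℝ)) :
    IsGridPoint τ α (gridRound τ α x) := fun i => by
  refine ⟨(round ((x i - α i) / τ)).natAbs, ?_⟩
  simp only [gridRound, PiLp.toLp_apply, add_sub_cancel_left, abs_mul, abs_of_pos hτ,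
    Nat.cast_natAbs, Int.cast_abs]
  ring

lemma abs_gridRound_sub_le {τ : ℝ} (hτ : 0 < τ) (α x : PiLp q (fun _ : ι => ℝ)) (i : ι) :
    |gridRound τ α x i - x i| ≤ τ / 2 := by
  have hround := abs_sub_round ((x i - α i) / τ)
  have hx : gridRound τ α x i - x i = -τ * ((x i - α i) / τ - round ((x i - α i) / τ)) := by
    simp only [gridRound, PiLp.toLp_apply]
    field_simp
    ring
  rw [hx, abs_mul, abs_neg, abs_of_pos hτ]
  linarith [mul_le_mul_of_nonneg_left hround hτ.le]

lemma dist_gridRound_le {n : ℕ} {p : ℝ} (hp : 1 ≤ p) [Fact (1 ≤ ENNReal.ofReal p)] {τ : ℝ}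
    (hτ : 0 < τ) (α x : PiLp (ENNReal.ofReal p) (fun _ : Fin n => ℝ)) :
    dist x (gridRound τ α x) ≤ ((n : ℝ) * τ ^ p) ^ (1 / p) / 2 := by
  have hp0 : 0 < p := zero_lt_one.trans_le hp
  have half_rpow : ((n : ℝ) * (τ / 2) ^ p) ^ (1 / p) = ((n : ℝ) * τ ^ p) ^ (1 / p) / 2 := by
    rw [Real.div_rpow hτ.le zero_le_two, ← mul_div_assoc,
      Real.div_rpow (by positivity) (by positivity), ← Real.rpow_mul zero_le_two,
      mul_one_div_cancel hp0.ne', Real.rpow_one]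
  have hnorm := PiLp.norm_le_of_forall_norm_le hp0 (x := gridRound τ α x - x) (r := τ / 2)
    fun i => abs_gridRound_sub_le hτ α x i
  rwa [Fintype.card_fin, half_rpow, ← dist_eq_norm, dist_comm] at hnorm

end Grid

lemma Real.sInf_le_sInf_add {A B : Set ℝ} (hA : BddBelow A) (hB : B.Nonempty) {r : ℝ}
    (h : ∀ b ∈ B, ∃ a ∈ A, a ≤ b + r) : sInf A ≤ sInf B + r := by
  rw [← sub_le_iff_le_add]
  refine le_csInf hB fun b hb => ?_
  obtain ⟨a, ha, hab⟩ := h b hb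
  linarith [csInf_le hA ha]

theorem msr_fmsr_provable_guarantee_general
    (n : ℕ) (p : ℝ) (hp : 1 ≤ p) [Fact (1 ≤ ENNReal.ofReal p)]
    {C : Type*} [Fintype C] [DecidableEq C] [Nontrivial C]
    (f : C → PiLp (ENNReal.ofReal p) (fun _ : Fin n => ℝ) → ℝ)
    (K : C → ℝ) (hK : ∀ c, 0 < K c)
    (hf : ∀ c x y, |f c x - f c y| ≤ K c * dist x y)
    (α : PiLp (ENNReal.ofReal p) (fun _ : Fin n => ℝ))
    (c : C) (d : ℝ)
    (τ : ℝ) (hτ : 0 < τ)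
    (hadv : ∃ x : PiLp (ENNReal.ofReal p) (fun _ : Fin n => ℝ),
      ‖x - α‖ ≤ d ∧ 0 < margin f c x)
    (hgrid : ∀ x', IsGridPoint τ α x' →
      ∃ c', (∀ c'', f c' x' ≥ f c'' x') ∧
        ((n : ℝ) * τ ^ p) ^ (1 / p) ≤ 2 * margin f c' x' / Mconst K c') :
    sInf ((fun y => ‖y - α‖) '' {y | IsGridPoint τ α y ∧ 0 < margin f c y}) -
        ((n : ℝ) * τ ^ p) ^ (1 / p) / 2 ≤
      sInf ((fun x => ‖x - α‖) '' {x | ‖x - α‖ ≤ d ∧ 0 < margin f c x}) ∧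
    sInf ((fun x => ‖x - α‖) '' {x | ‖x - α‖ ≤ d ∧ 0 < margin f c x}) ≤
      sInf ((fun y => ‖y - α‖) '' {y | IsGridPoint τ α y ∧ 0 < margin f c y}) := by
  set δ := ((n : ℝ) * τ ^ p) ^ (1 / p)
  have bdd (S : Set (PiLp (ENNReal.ofReal p) (fun _ : Fin n => ℝ))) :
      BddBelow ((fun x => ‖x - α‖) '' S) :=
    ⟨0, by rintro _ ⟨x, -, rfl⟩; exact norm_nonneg _⟩
  have near_grid (x) (hx : 0 < margin f c x) : ∃ y, IsGridPoint τ α y ∧ 0 < margin f c y ∧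
      ‖y - α‖ ≤ ‖x - α‖ + δ / 2 := by
    set y := gridRound τ α x
    have hxy := dist_gridRound_le hp hτ α x
    obtain ⟨c', -, hc'⟩ := hgrid y (isGridPoint_gridRound hτ α x)
    have hM := Mconst_pos hK c'
    have hdom : Mconst K c' * dist x y ≤ margin f c' y := by
      rw [le_div_iff₀ hM] at hc'
      linarith [mul_le_mul_of_nonneg_left hxy hM.le]
    obtain ⟨rfl, hy⟩ := eq_and_margin_pos_of_Mconst_mul_dist_le hf hx hdom
    refine ⟨y, isGridPoint_gridRound hτ α x, hy, ?_⟩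
    linarith [norm_sub_le_norm_sub_add_norm_sub y x α, dist_eq_norm y x, dist_comm x y]
  obtain ⟨x₀, hx₀d, hx₀⟩ := hadv
  constructor
  · rw [sub_le_iff_le_add]
    refine Real.sInf_le_sInf_add (bdd _) ?_ ?_
    · exact ⟨_, x₀, ⟨hx₀d, hx₀⟩, rfl⟩
    rintro _ ⟨x, ⟨-, hx⟩, rfl⟩
    obtain ⟨y, hy, hyc, hyα⟩ := near_grid x hx
    exact ⟨_, ⟨y, ⟨hy, hyc⟩, rfl⟩, hyα⟩
  · obtain ⟨y₀, hy₀, hy₀c, -⟩ := near_grid x₀ hx₀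
    rw [← add_zero (sInf (_ '' {y | IsGridPoint τ α y ∧ _}))]
    refine Real.sInf_le_sInf_add (bdd _) ?_ ?_
    · exact ⟨_, y₀, ⟨hy₀, hy₀c⟩, rfl⟩
    rintro _ ⟨y, ⟨-, hyc⟩, rfl⟩
    by_cases hyd : ‖y - α‖ ≤ d
    · exact ⟨_, ⟨y, ⟨hyd, hyc⟩, rfl⟩, by simp⟩
    · exact ⟨_, ⟨x₀, ⟨hx₀d, hx₀⟩, rfl⟩, by linarith⟩

/-- **Provable guarantee for approximating the maximum safe radius by finite
optimisation over the τ-grid:** `m_G − δ/2 ≤ m ≤ m_G`. -/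
theorem msr_fmsr_provable_guarantee
    (n : ℕ) (hn : 1 ≤ n) (p : ℝ) (hp : 1 ≤ p) [Fact (1 ≤ ENNReal.ofReal p)]
    {C : Type*} [Fintype C] [DecidableEq C] [Nontrivial C]
    (f : C → PiLp (ENNReal.ofReal p) (fun _ : Fin n => ℝ) → ℝ)
    (K : C → ℝ) (hK : ∀ c, 0 < K c)
    (hf : ∀ c x y, |f c x - f c y| ≤ K c * dist x y)
    (α : PiLp (ENNReal.ofReal p) (fun _ : Fin n => ℝ))
    (c₀ : C) (hα : 0 < margin f c₀ α)
    (c : C) (hc : c ≠ c₀) (d : ℝ) (hd : 0 < d)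
    (τ : ℝ) (hτ : 0 < τ)
    (hadv : ∃ x : PiLp (ENNReal.ofReal p) (fun _ : Fin n => ℝ),
      ‖x - α‖ ≤ d ∧ 0 < margin f c x)
    (hgrid : ∀ x', IsGridPoint τ α x' →
      ∃ c', (∀ c'', f c' x' ≥ f c'' x') ∧
        ((n : ℝ) * τ ^ p) ^ (1 / p) ≤ 2 * margin f c' x' / Mconst K c') :
    sInf ((fun y => ‖y - α‖) '' {y | IsGridPoint τ α y ∧ 0 < margin f c y}) -
        ((n : ℝ) * τ ^ p) ^ (1 / p) / 2 ≤
      sInf ((fun x => ‖x - α‖) '' {x | ‖x - α‖ ≤ d ∧ 0 < margin f c x}) ∧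
    sInf ((fun x => ‖x - α‖) '' {x | ‖x - α‖ ≤ d ∧ 0 < margin f c x}) ≤
      sInf ((fun y => ‖y - α‖) '' {y | IsGridPoint τ α y ∧ 0 < margin f c y}) :=
  msr_fmsr_provable_guarantee_general n p hp f K hK hf α c d τ hτ hadv hgrid
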